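/- arXiv:2308.14926 — 2 statements merged into one kernel-verified Lean document; each statement's English description precedes it below -/
import Mathlib

section
/- Let V=(d,Q,Δ) be a VASS and let s(v) and t(w) be configurations in Q×ℕ^d. Then s(v)⇝*t(w'') for some w''≥w (componentwise) if and only if there is a permutation σ of {1,…,d} and there are ℤ-configurations p_d(v_d),…,p_1(v_1), t(w') such that (1) s(v)→ℤ*p_d(v_d)→ℤ*p_{d-1}(v_{d-1})→ℤ*⋯→ℤ*p_1(v_1)→ℤ*t(w'), and (2) for each j∈{1,…,d}, w'[j]+|min(v_{σ^{-1}(j)}[j],0)| ≥ w[j]. -/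
/-- A transition of a `d`-dimensional VASS over state set `Q`:
a source state, an update vector in `ℤ^d`, and a target state. -/
abbrev VTrans (d : ℕ) (Q : Type*) := Q × (Fin d → ℤ) × Q

/-- A vector addition system with states (VASS), given by its set of transitions. -/
structure VASS (d : ℕ) (Q : Type*) where
  Δ : Set (VTrans d Q)

variable {d : ℕ} {Q : Type*}

/-- A sequence of transitions is a path if consecutive states match. -/
def IsPath (ρ : List (VTrans d Q)) : Prop := ρ.Chain' (fun t t' => t.2.2 = t'.1)

/-- A path of the VASS `V`. -/
def PathIn (V : VASS d Q) (ρ : List (VTrans d Q)) : Prop :=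
  IsPath ρ ∧ ∀ t ∈ ρ, t ∈ V.Δ

/-- The path starts at state `s` (any state works for the empty path). -/
def FromState (s : Q) (ρ : List (VTrans d Q)) : Prop :=
  match ρ with
  | [] => True
  | t :: _ => t.1 = s

/-- The last state of the run induced by `ρ` from state `s`. -/
def endState (s : Q) (ρ : List (VTrans d Q)) : Q := (ρ.map (fun t => t.2.2)).getLastD s

/-- Cast a vector over `ℕ` to a vector over `ℤ`. -/
def ofNatVec (v : Fin d → ℕ) : Fin d → ℤ := fun j => (v j : ℤ)

/-- The `i`-th vector of the ℤ-run induced by the path `ρ` from initial vector `v`. -/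
def zrun (v : Fin d → ℤ) (ρ : List (VTrans d Q)) (i : ℕ) : Fin d → ℤ :=
  v + ((ρ.take i).map (fun t => t.2.1)).sum

/-- The last vector of the ℤ-run induced by `ρ` from `v`. -/
def zend (v : Fin d → ℤ) (ρ : List (VTrans d Q)) : Fin d → ℤ := zrun v ρ ρ.length

/-- One step of the monus semantics: add `z` and truncate at `0` componentwise. -/
def mstep (v : Fin d → ℕ) (z : Fin d → ℤ) : Fin d → ℕ := fun j => ((v j : ℤ) + z j).toNat

/-- The `i`-th vector of the monus run induced by the path `ρ` from initial vector `v`. -/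
def mrun (v : Fin d → ℕ) (ρ : List (VTrans d Q)) (i : ℕ) : Fin d → ℕ :=
  (ρ.take i).foldl (fun u t => mstep u t.2.1) v

/-- The last vector of the monus run induced by `ρ` from `v`. -/
def mend (v : Fin d → ℕ) (ρ : List (VTrans d Q)) : Fin d → ℕ := mrun v ρ ρ.length

/-- The classical run induced by `ρ` from `v` exists: no value of the ℤ-run
drops below zero in any coordinate. -/
def ClassicalOK (v : Fin d → ℕ) (ρ : List (VTrans d Q)) : Prop :=
  ∀ i ≤ ρ.length, ∀ j, 0 ≤ zrun (ofNatVec v) ρ i j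

/-- Classical reachability `s(v) →* t(w)`. -/
def ClassicalReach (V : VASS d Q) (s : Q) (v : Fin d → ℕ) (t : Q) (w : Fin d → ℕ) : Prop :=
  ∃ ρ, PathIn V ρ ∧ FromState s ρ ∧ endState s ρ = t ∧ ClassicalOK v ρ ∧
    zend (ofNatVec v) ρ = ofNatVec w

/-- Reachability in ℤ-semantics `s(v) →ℤ* t(w)`. -/
def ZReach (V : VASS d Q) (s : Q) (v : Fin d → ℤ) (t : Q) (w : Fin d → ℤ) : Prop :=
  ∃ ρ, PathIn V ρ ∧ FromState s ρ ∧ endState s ρ = t ∧ zend v ρ = w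

/-- Reachability in monus semantics `s(v) ⇝* t(w)`. -/
def MonusReach (V : VASS d Q) (s : Q) (v : Fin d → ℕ) (t : Q) (w : Fin d → ℕ) : Prop :=
  ∃ ρ, PathIn V ρ ∧ FromState s ρ ∧ endState s ρ = t ∧ mend v ρ = w

/-- Coordinate `j` hits `0` in the ℤ-run (equivalently, classical run) induced
by `ρ` from `v` (at some index `1 ≤ i ≤ k`). -/
def HitsZeroZ (v : Fin d → ℤ) (ρ : List (VTrans d Q)) (j : Fin d) : Prop :=
  ∃ i, 1 ≤ i ∧ i ≤ ρ.length ∧ zrun v ρ i j = 0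

/-- Coordinate `j` hits `0` in the monus run induced by `ρ` from `v`. -/
def HitsZeroM (v : Fin d → ℕ) (ρ : List (VTrans d Q)) (j : Fin d) : Prop :=
  ∃ i, 1 ≤ i ∧ i ≤ ρ.length ∧ mrun v ρ i j = 0

/-- The monus run induced by `ρ` from `v` is lossy: at some step, for some
coordinate, the actual change differs from the transition's update. -/
def Lossy (v : Fin d → ℕ) (ρ : List (VTrans d Q)) : Prop :=
  ∃ (i : Fin ρ.length) (j : Fin d),
    (mrun v ρ ((i : ℕ) + 1) j : ℤ) ≠ (mrun v ρ (i : ℕ) j : ℤ) + (ρ.get i).2.1 j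

/-- `mi ρ s₀ v₀`: the coordinatewise minimum (with `0`) of all values along
the ℤ-run induced by `ρ` from `v`. -/
def mi (v : Fin d → ℤ) (ρ : List (VTrans d Q)) : Fin d → ℤ :=
  fun j => min 0 ((Finset.range (ρ.length + 1)).inf' Finset.nonempty_range_add_one
    (fun i => zrun v ρ i j))

/-- The reverse VASS: `(p,z,q)` is a transition iff `(q,-z,p)` is one of `V`. -/
def revV (V : VASS d Q) : VASS d Q := ⟨{tr | (tr.2.2, -tr.2.1, tr.1) ∈ V.Δ}⟩

/-- Coverability in monus semantics. -/
def MonusCover (V : VASS d Q) (s : Q) (v : Fin d → ℕ) (t : Q) (w : Fin d → ℕ) : Prop :=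
  ∃ w', w ≤ w' ∧ MonusReach V s v t w'

/-- Coverability in classical semantics. -/
def ClassicalCover (V : VASS d Q) (s : Q) (v : Fin d → ℕ) (t : Q) (w : Fin d → ℕ) : Prop :=
  ∃ w', w ≤ w' ∧ ClassicalReach V s v t w'

/-!
Along a path, the monus run equals the ℤ-run minus its running minimum `min(0, min_{i ≤ k} x_i)`,
coordinatewise: truncation at `0` loses exactly the depth the ℤ-run has reached below `0`. Hence
the monus run ends at `zend - mi`, and it covers `w` iff `w[j] ≤ w'[j] + |mi[j]|` for every `j`.
Cutting the run at the positions where the coordinates attain their minima, in increasing order,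
yields the chain of ℤ-reachability steps; conversely the concatenated chain is a single ℤ-run
passing through every `v_i`, so its minimum in coordinate `j` is at most `min(v_{σ⁻¹(j)}[j], 0)`.
-/

section Paths

variable {d : ℕ} {Q : Type*}

def PathFrom (V : VASS d Q) (s : Q) (ρ : List (VTrans d Q)) : Prop :=
  PathIn V ρ ∧ FromState s ρ

lemma isPath_iff_isChain {ρ : List (VTrans d Q)} :
    IsPath ρ ↔ ρ.IsChain (fun t t' => t.2.2 = t'.1) := Iff.rfl

lemma fromState_iff {s : Q} {ρ : List (VTrans d Q)} :
    FromState s ρ ↔ ∀ tr ∈ ρ.head?, tr.1 = s := by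
  cases ρ <;> simp [FromState]

@[simp] lemma endState_nil (s : Q) : endState s ([] : List (VTrans d Q)) = s := rfl

@[simp] lemma endState_concat (s : Q) (ρ : List (VTrans d Q)) (tr : VTrans d Q) :
    endState s (ρ ++ [tr]) = tr.2.2 := by
  simp [endState]

lemma endState_append (s : Q) (ρ₁ ρ₂ : List (VTrans d Q)) :
    endState s (ρ₁ ++ ρ₂) = endState (endState s ρ₁) ρ₂ := by
  rcases ρ₂.eq_nil_or_concat' with rfl | ⟨ρ, tr, rfl⟩
  · simp
  · rw [← List.append_assoc, endState_concat, endState_concat]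

lemma pathFrom_append_iff {V : VASS d Q} {s : Q} {ρ₁ ρ₂ : List (VTrans d Q)} :
    PathFrom V s (ρ₁ ++ ρ₂) ↔ PathFrom V s ρ₁ ∧ PathFrom V (endState s ρ₁) ρ₂ := by
  rcases ρ₁.eq_nil_or_concat' with rfl | ⟨ρ, tr, rfl⟩
  · simp [PathFrom, PathIn, isPath_iff_isChain, FromState]
  · simp only [PathFrom, PathIn, isPath_iff_isChain, fromState_iff, List.isChain_append,
      endState_concat, List.mem_append, List.head?_append, List.head?_cons, Option.or_assoc,
      Option.some_or, Option.mem_def, Option.some.injEq, forall_eq', or_imp, forall_and]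
    grind

end Paths

section Runs

variable {d : ℕ} {Q : Type*}

@[simp] lemma zrun_zero (u : Fin d → ℤ) (ρ : List (VTrans d Q)) : zrun u ρ 0 = u := by
  simp [zrun]

lemma zrun_eq_zend_take (u : Fin d → ℤ) (ρ : List (VTrans d Q)) (a : ℕ) :
    zrun u ρ a = zend u (ρ.take a) := by
  rw [zend, zrun, zrun, List.take_length]

lemma zend_append (u : Fin d → ℤ) (ρ₁ ρ₂ : List (VTrans d Q)) :
    zend u (ρ₁ ++ ρ₂) = zend (zend u ρ₁) ρ₂ := by
  simp only [zend, zrun, List.take_length, List.map_append, List.sum_append, add_assoc]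

lemma zrun_append_of_le (u : Fin d → ℤ) (ρ₁ ρ₂ : List (VTrans d Q)) {a : ℕ}
    (ha : a ≤ ρ₁.length) : zrun u (ρ₁ ++ ρ₂) a = zrun u ρ₁ a := by
  rw [zrun, zrun, List.take_append_of_le_length ha]

lemma zrun_succ (u : Fin d → ℤ) (ρ : List (VTrans d Q)) {k : ℕ} (hk : k < ρ.length) :
    zrun u ρ (k + 1) = zrun u ρ k + ρ[k].2.1 := by
  simp only [zrun, List.take_add_one, List.getElem?_eq_getElem hk, Option.toList_some,
    List.map_append, List.map_singleton, List.sum_append, List.sum_singleton, add_assoc]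

lemma mrun_succ (v : Fin d → ℕ) (ρ : List (VTrans d Q)) {k : ℕ} (hk : k < ρ.length) :
    mrun v ρ (k + 1) = mstep (mrun v ρ k) ρ[k].2.1 := by
  simp only [mrun, List.take_add_one, List.getElem?_eq_getElem hk, Option.toList_some,
    List.foldl_append, List.foldl_cons, List.foldl_nil]

lemma mrun_eq_zrun_sub_min (v : Fin d → ℕ) (ρ : List (VTrans d Q)) {k : ℕ} (hk : k ≤ ρ.length)
    (j : Fin d) :
    (mrun v ρ k j : ℤ) = zrun (ofNatVec v) ρ k j -
      min 0 ((Finset.range (k + 1)).inf' Finset.nonempty_range_add_one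
        (fun i => zrun (ofNatVec v) ρ i j)) := by
  induction k with
  | zero => simp [mrun, ofNatVec]
  | succ k ih =>
    have hk' : k < ρ.length := hk
    have hinf : (Finset.range (k + 1 + 1)).inf' Finset.nonempty_range_add_one
        (fun i => zrun (ofNatVec v) ρ i j) = min (zrun (ofNatVec v) ρ (k + 1) j)
          ((Finset.range (k + 1)).inf' Finset.nonempty_range_add_one
            (fun i => zrun (ofNatVec v) ρ i j)) := by
      simp only [Finset.range_add_one (n := k + 1),
        Finset.inf'_insert Finset.nonempty_range_add_one]
    have hinf_le := Finset.inf'_le (fun i => zrun (ofNatVec v) ρ i j) (Finset.self_mem_range_succ k)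
    rw [hinf, mrun_succ v ρ hk', zrun_succ _ ρ hk', Pi.add_apply]
    simp only [mstep, Int.toNat_eq_max]
    have := ih hk'.le
    omega

lemma mend_eq_zend_sub_mi (v : Fin d → ℕ) (ρ : List (VTrans d Q)) (j : Fin d) :
    (mend v ρ j : ℤ) = zend (ofNatVec v) ρ j - mi (ofNatVec v) ρ j :=
  mrun_eq_zrun_sub_min v ρ le_rfl j

lemma mi_le (u : Fin d → ℤ) (ρ : List (VTrans d Q)) {a : ℕ} (ha : a ≤ ρ.length) (j : Fin d) :
    mi u ρ j ≤ min 0 (zrun u ρ a j) :=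
  min_le_min_left 0 (Finset.inf'_le _ (Finset.mem_range_succ_iff.2 ha))

lemma exists_mi_eq (u : Fin d → ℤ) (ρ : List (VTrans d Q)) (j : Fin d) :
    ∃ a ≤ ρ.length, mi u ρ j = min 0 (zrun u ρ a j) := by
  obtain ⟨a, ha, heq⟩ := Finset.exists_mem_eq_inf' Finset.nonempty_range_add_one
    (fun i => zrun u ρ i j)
  exact ⟨a, Finset.mem_range_succ_iff.1 ha, congrArg (min 0) heq⟩

lemma zend_add_abs_min_le_mend (v : Fin d → ℕ) (ρ : List (VTrans d Q)) {a : ℕ}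
    (ha : a ≤ ρ.length) (j : Fin d) :
    zend (ofNatVec v) ρ j + |min (zrun (ofNatVec v) ρ a j) 0| ≤ mend v ρ j := by
  rw [mend_eq_zend_sub_mi, abs_of_nonpos (min_le_right _ _), min_comm]
  linarith [mi_le (ofNatVec v) ρ ha j]

lemma exists_mend_eq_zend_add_abs_min (v : Fin d → ℕ) (ρ : List (VTrans d Q)) (j : Fin d) :
    ∃ a ≤ ρ.length,
      (mend v ρ j : ℤ) = zend (ofNatVec v) ρ j + |min (zrun (ofNatVec v) ρ a j) 0| := by
  obtain ⟨a, ha, hmi⟩ := exists_mi_eq (ofNatVec v) ρ j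
  refine ⟨a, ha, ?_⟩
  rw [mend_eq_zend_sub_mi, hmi, abs_of_nonpos (min_le_right _ _), min_comm]
  ring

end Runs

section Chains

variable {d : ℕ} {Q : Type*}

lemma zreach_take_of_le {V : VASS d Q} {s : Q} {ρ : List (VTrans d Q)} (hρ : PathFrom V s ρ)
    (u : Fin d → ℤ) {a b : ℕ} (hab : a ≤ b) :
    ZReach V (endState s (ρ.take a)) (zrun u ρ a) (endState s (ρ.take b)) (zrun u ρ b) := by
  have hsplit : ρ.take b = ρ.take a ++ (ρ.take b).drop a := by
    conv_lhs => rw [← List.take_append_drop a (ρ.take b), List.take_take, min_eq_left hab]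
  have hprefix : PathFrom V s (ρ.take b) :=
    (pathFrom_append_iff.1 (by rwa [List.take_append_drop])).1
  rw [hsplit] at hprefix
  rw [zrun_eq_zend_take, zrun_eq_zend_take, hsplit, endState_append, zend_append]
  exact ⟨_, (pathFrom_append_iff.1 hprefix).2.1, (pathFrom_append_iff.1 hprefix).2.2, rfl, rfl⟩

lemma exists_pathFrom_through {V : VASS d Q} :
    ∀ {n : ℕ} (g : Fin (n + 1) → Q × (Fin d → ℤ)),
      (∀ i : Fin n, ZReach V (g i.castSucc).1 (g i.castSucc).2 (g i.succ).1 (g i.succ).2) →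
      ∃ π, PathFrom V (g 0).1 π ∧ endState (g 0).1 π = (g (Fin.last n)).1 ∧
        zend (g 0).2 π = (g (Fin.last n)).2 ∧
        ∀ i, ∃ a ≤ π.length, zrun (g 0).2 π a = (g i).2
  | 0, g, _ => ⟨[], ⟨⟨List.isChain_nil, by simp⟩, trivial⟩, rfl, by simp [zend],
      fun i => ⟨0, le_rfl, by rw [Fin.fin_one_eq_zero i, zrun_zero]⟩⟩
  | n + 1, g, hg => by
    obtain ⟨π, hπ, hend, hzend, hthrough⟩ := exists_pathFrom_through (Fin.init g)
      (fun i => hg i.castSucc)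
    obtain ⟨π', hπ', hstart', hend', hzend'⟩ := hg (Fin.last n)
    have hinit_zero : Fin.init g 0 = g 0 := rfl
    have hinit_last : Fin.init g (Fin.last n) = g (Fin.last n).castSucc := rfl
    rw [hinit_zero] at hπ hend hzend
    rw [hinit_last] at hend hzend
    rw [Fin.succ_last] at hend' hzend'
    refine ⟨π ++ π', pathFrom_append_iff.2 ⟨hπ, ?_⟩, ?_, ?_, Fin.lastCases ?_ fun i => ?_⟩
    · rw [hend]; exact ⟨hπ', hstart'⟩
    · rw [endState_append, hend]; exact hend'
    · rw [zend_append, hzend]; exact hzend'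
    · exact ⟨(π ++ π').length, le_rfl, (zend_append _ _ _).trans (hzend ▸ hzend')⟩
    · obtain ⟨a, ha, hza⟩ := hthrough i
      exact ⟨a, by simp; omega, (zrun_append_of_le _ _ _ ha).trans hza⟩

end Chains

lemma exists_monotone_through_of_le {d : ℕ} (m : Fin d → ℕ) {L : ℕ} (hm : ∀ j, m j ≤ L) :
    ∃ (r : Fin (d + 2) → ℕ) (σ : Equiv.Perm (Fin d)), Monotone r ∧ r 0 = 0 ∧
      r (Fin.last (d + 1)) = L ∧
      ∀ j, r ⟨d - (σ.symm j : ℕ), (Nat.sub_le d _).trans_lt (by omega)⟩ = m j := by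
  set τ := Tuple.sort m
  let R : ℕ → ℕ := fun n => if n = 0 then 0 else if h : n - 1 < d then m (τ ⟨n - 1, h⟩) else L
  have hR : Monotone R := by
    intro a b hab
    simp only [R]
    split_ifs
    all_goals first
      | omega
      | exact hm _
      | exact Tuple.monotone_sort m (Fin.mk_le_mk.2 (by omega))
  -- the statement numbers the checkpoints `p_d, …, p_1`, hence the reversal
  refine ⟨fun i => R i, (τ.symm.trans Fin.revPerm).symm, fun _ _ h => hR h, by simp [R],
    by simp [R], fun j => ?_⟩
  have hidx : d - ((τ.symm.trans Fin.revPerm).symm.symm j : ℕ) = (τ.symm j : ℕ) + 1 := by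
    simp only [Equiv.symm_symm, Equiv.trans_apply, Fin.revPerm_apply, Fin.val_rev]
    omega
  change R (d - _) = m j
  rw [hidx]
  simp [R]

/-- The chain `s(v), p_d(v_d), …, p_1(v_1), t(w')` is `g 0, g 1, …, g (d + 1)`, so
`p_{σ⁻¹(j)}(v_{σ⁻¹(j)})` is `g (d - σ⁻¹ j)`. -/
theorem stmt11 {d : ℕ} {Q : Type*} (V : VASS d Q) (s t : Q) (v w : Fin d → ℕ) :
    (∃ w'' : Fin d → ℕ, w ≤ w'' ∧ MonusReach V s v t w'') ↔
    ∃ (σ : Equiv.Perm (Fin d)) (g : Fin (d + 2) → Q × (Fin d → ℤ)),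
      g 0 = (s, ofNatVec v) ∧ (g (Fin.last (d + 1))).1 = t ∧
      (∀ i : Fin (d + 1),
        ZReach V (g i.castSucc).1 (g i.castSucc).2 (g i.succ).1 (g i.succ).2) ∧
      (∀ j : Fin d, (w j : ℤ) ≤
        (g (Fin.last (d + 1))).2 j +
          |min ((g ⟨d - (σ.symm j : ℕ), by omega⟩).2 j) 0|) := by
  constructor
  · rintro ⟨w'', hw, ρ, hpath, hfrom, hend, rfl⟩
    choose m hm hmend using exists_mend_eq_zend_add_abs_min v ρ
    obtain ⟨r, σ, hr, hr0, hrL, hrm⟩ := exists_monotone_through_of_le m hm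
    refine ⟨σ, fun i => (endState s (ρ.take (r i)), zrun (ofNatVec v) ρ (r i)), by simp [hr0],
      by simp [hrL, hend], fun i => zreach_take_of_le ⟨hpath, hfrom⟩ _ (hr i.castSucc_le_succ),
      fun j => ?_⟩
    simp only [hrL, hrm]
    exact (Int.ofNat_le.2 (hw j)).trans_eq (hmend j)
  · rintro ⟨σ, g, hg0, hgt, hchain, hcover⟩
    obtain ⟨π, hπ, hend, hzend, hthrough⟩ := exists_pathFrom_through g hchain
    rw [hg0] at hπ hend hzend hthrough
    refine ⟨mend v π, fun j => ?_, π, hπ.1, hπ.2, hend.trans hgt, rfl⟩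
    obtain ⟨a, ha, hza⟩ := hthrough ⟨d - (σ.symm j : ℕ), by omega⟩
    have hcover_j := hcover j
    rw [← hza, ← hzend] at hcover_j
    exact_mod_cast hcover_j.trans (zend_add_abs_min_le_mend v π ha j)
end

section
/- Let a_1,…,a_n,a∈ℕ and let V be the 2-VASS with states s=q_0,q_1,…,q_{n+1},t and transitions: (q_0,(1,a+1),q_1); for each 1≤i≤n both (q_i,(a_i,−a_i),q_{i+1}) and (q_i,(0,0),q_{i+1}); and (q_{n+1},(−a,0),t). Then t(1,1) is coverable from s(0,0) in V under monus semantics if and only if there exists (x_1,…,x_n)∈{0,1}^n with x_1a_1+⋯+x_na_n=a. -/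
variable {d : ℕ} {Q : Type*}

/-- The 2-VASS for the subset-sum reduction: states `q_0, q_1, …, q_{n+1}`
(encoded as `Sum.inl i` for `i : Fin (n+2)`) and `t` (encoded as `Sum.inr ()`),
with transitions `(q_0, (1, a+1), q_1)`; for each `1 ≤ i ≤ n` both
`(q_i, (a_i, -a_i), q_{i+1})` and `(q_i, (0,0), q_{i+1})`; and
`(q_{n+1}, (-a, 0), t)`. -/
def ssVASS2 (n : ℕ) (as : Fin n → ℕ) (a : ℕ) : VASS 2 (Fin (n + 2) ⊕ Unit) :=
  ⟨{tr | tr = (Sum.inl ⟨0, by omega⟩, ![1, (a : ℤ) + 1], Sum.inl ⟨1, by omega⟩) ∨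
         (∃ i : Fin n, tr = (Sum.inl ⟨(i : ℕ) + 1, by have := i.isLt; omega⟩,
            ![(as i : ℤ), -(as i : ℤ)],
            Sum.inl ⟨(i : ℕ) + 2, by have := i.isLt; omega⟩)) ∨
         (∃ i : Fin n, tr = (Sum.inl ⟨(i : ℕ) + 1, by have := i.isLt; omega⟩,
            ![0, 0],
            Sum.inl ⟨(i : ℕ) + 2, by have := i.isLt; omega⟩)) ∨
         tr = (Sum.inl ⟨n + 1, by omega⟩, ![-(a : ℤ), 0], Sum.inr ())}⟩

/-!
A path from `s` to `t` is forced through `q_0, q_1, …, q_{n+1}, t`; its only freedom is a choice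
vector `x ∈ {0,1}^n` saying which of the transitions `(a_i, -a_i)` are taken. Writing
`S = ∑ x_i a_i`, the first coordinate only grows and the second only shrinks before the last
step, so truncation just clamps, and the run ends in `((1 + S) ∸ a, (a + 1) ∸ S)`. Both
coordinates are at least `1` iff `a ≤ S` and `S ≤ a`.
-/

section MonusCover

variable {d : ℕ} {Q : Type*} {V : VASS d Q} {s t : Q} {v w : Fin d → ℕ}

lemma mend_cons (v : Fin d → ℕ) (tr : VTrans d Q) (ρ : List (VTrans d Q)) :
    mend v (tr :: ρ) = mend (mstep v tr.2.1) ρ := by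
  simp [mend, mrun]

lemma endState_cons (s : Q) (tr : VTrans d Q) (ρ : List (VTrans d Q)) :
    endState s (tr :: ρ) = endState tr.2.2 ρ := by
  simp only [endState, List.map_cons, List.getLastD_cons]

lemma isPath_cons_iff {tr : VTrans d Q} {ρ : List (VTrans d Q)} :
    IsPath (tr :: ρ) ↔ FromState tr.2.2 ρ ∧ IsPath ρ := by
  cases ρ with
  | nil => exact iff_of_true (List.isChain_singleton _) ⟨trivial, List.isChain_nil⟩
  | cons tr' ρ => exact List.isChain_cons_cons.trans (and_congr_left' eq_comm)

lemma pathIn_cons_iff {tr : VTrans d Q} {ρ : List (VTrans d Q)} :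
    PathIn V (tr :: ρ) ↔ tr ∈ V.Δ ∧ FromState tr.2.2 ρ ∧ PathIn V ρ := by
  simp only [PathIn, isPath_cons_iff, List.forall_mem_cons]
  tauto

lemma monusCover_iff_exists_path :
    MonusCover V s v t w ↔
      ∃ ρ, PathIn V ρ ∧ FromState s ρ ∧ endState s ρ = t ∧ w ≤ mend v ρ := by
  constructor
  · rintro ⟨_, hw, ρ, hρ, hs, ht, rfl⟩
    exact ⟨ρ, hρ, hs, ht, hw⟩
  · rintro ⟨ρ, hρ, hs, ht, hw⟩
    exact ⟨_, hw, ρ, hρ, hs, ht, rfl⟩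

lemma monusCover_iff_of_ne (hst : s ≠ t) :
    MonusCover V s v t w ↔ ∃ z q, (s, z, q) ∈ V.Δ ∧ MonusCover V q (mstep v z) t w := by
  simp only [monusCover_iff_exists_path]
  constructor
  · rintro ⟨_ | ⟨⟨s', z, q⟩, ρ⟩, hρ, hs, ht, hw⟩
    · exact absurd ht hst
    · obtain rfl : s' = s := hs
      rw [pathIn_cons_iff] at hρ
      rw [endState_cons] at ht
      rw [mend_cons] at hw
      exact ⟨z, q, hρ.1, ρ, hρ.2.2, hρ.2.1, ht, hw⟩
  · rintro ⟨z, q, hz, ρ, hρ, hq, ht, hw⟩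
    exact ⟨(s, z, q) :: ρ, pathIn_cons_iff.2 ⟨hz, hq, hρ⟩, rfl, by rwa [endState_cons],
      by rwa [mend_cons]⟩

lemma monusCover_self_iff_of_forall_notMem (hout : ∀ z q, (s, z, q) ∉ V.Δ) :
    MonusCover V s v s w ↔ w ≤ v := by
  simp only [monusCover_iff_exists_path]
  constructor
  · rintro ⟨_ | ⟨⟨s', z, q⟩, ρ⟩, hρ, hs, -, hw⟩
    · exact hw
    · obtain rfl : s' = s := hs
      exact absurd (pathIn_cons_iff.1 hρ).1 (hout z q)
  · intro hw
    exact ⟨[], ⟨List.isChain_nil, by simp⟩, trivial, rfl, hw⟩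

end MonusCover

section SubsetSum

variable {n : ℕ} (as : Fin n → ℕ)

def tailSum (x : Fin n → ℕ) (k : ℕ) : ℕ :=
  ∑ i ∈ Finset.univ.filter (fun i : Fin n => k ≤ (i : ℕ)), x i * as i

variable {as}

lemma tailSum_zero (x : Fin n → ℕ) : tailSum as x 0 = ∑ i, x i * as i := by
  simp [tailSum]

lemma tailSum_of_le (x : Fin n → ℕ) {k : ℕ} (hk : n ≤ k) : tailSum as x k = 0 :=
  Finset.sum_eq_zero fun i hi => absurd (Finset.mem_filter.1 hi).2 (by omega)

lemma tailSum_eq_add (x : Fin n → ℕ) (k : Fin n) :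
    tailSum as x k = x k * as k + tailSum as x (k + 1) := by
  have : Finset.univ.filter (fun i : Fin n => (k : ℕ) ≤ i) =
      insert k (Finset.univ.filter (fun i : Fin n => (k : ℕ) + 1 ≤ i)) := by
    ext i
    simp only [Finset.mem_filter, Finset.mem_univ, true_and, Finset.mem_insert, Fin.ext_iff]
    omega
  rw [tailSum, this, Finset.sum_insert (by simp)]
  rfl

lemma tailSum_update (x : Fin n → ℕ) (k : Fin n) (c : ℕ) :
    tailSum as (Function.update x k c) (k + 1) = tailSum as x (k + 1) :=
  Finset.sum_congr rfl fun i hi => by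
    rw [Function.update_of_ne (by rintro rfl; simp at hi)]

lemma exists_tailSum_iff (k : Fin n) {P : ℕ → Prop} :
    (∃ x : Fin n → ℕ, (∀ i, x i ≤ 1) ∧ P (tailSum as x k)) ↔
      ∃ x : Fin n → ℕ, (∀ i, x i ≤ 1) ∧
        (P (as k + tailSum as x (k + 1)) ∨ P (tailSum as x (k + 1))) := by
  constructor
  · rintro ⟨x, hx, hP⟩
    rw [tailSum_eq_add] at hP
    refine ⟨x, hx, ?_⟩
    rcases Nat.le_one_iff_eq_zero_or_eq_one.1 (hx k) with h | h <;> simp_all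
  · rintro ⟨x, hx, hP⟩
    have hupd (c : ℕ) (hc : c ≤ 1) : ∀ i, Function.update x k c i ≤ 1 := by
      intro i
      rcases eq_or_ne i k with rfl | hi
      · simpa
      · simpa [hi] using hx i
    rcases hP with hP | hP
    · refine ⟨Function.update x k 1, hupd 1 le_rfl, ?_⟩
      rwa [tailSum_eq_add, tailSum_update, Function.update_self, one_mul]
    · refine ⟨Function.update x k 0, hupd 0 zero_le_one, ?_⟩
      rwa [tailSum_eq_add, tailSum_update, Function.update_self, zero_mul, zero_add]

end SubsetSum

section SubsetSumVASS

variable {n : ℕ} {as : Fin n → ℕ} {a : ℕ} {z : Fin 2 → ℤ} {q : Fin (n + 2) ⊕ Unit}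

lemma mem_ssVASS2_Δ_zero :
    (Sum.inl ⟨0, by omega⟩, z, q) ∈ (ssVASS2 n as a).Δ ↔
      z = ![1, (a : ℤ) + 1] ∧ q = Sum.inl ⟨1, by omega⟩ := by
  simp [ssVASS2, Fin.ext_iff]

lemma mem_ssVASS2_Δ_succ (k : Fin n) :
    (Sum.inl ⟨k + 1, by omega⟩, z, q) ∈ (ssVASS2 n as a).Δ ↔
      (z = ![(as k : ℤ), -(as k : ℤ)] ∨ z = ![0, 0]) ∧
        q = Sum.inl ⟨k + 1 + 1, by omega⟩ := by
  simp only [ssVASS2, Set.mem_ofPred_eq, Prod.mk.injEq, Sum.inl.injEq, Fin.mk.injEq,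
    reduceCtorEq, false_and, false_or, Nat.add_right_cancel_iff, Fin.val_inj, exists_eq_left',
    k.isLt.ne, or_false, or_and_right]

lemma mem_ssVASS2_Δ_last :
    (Sum.inl ⟨n + 1, by omega⟩, z, q) ∈ (ssVASS2 n as a).Δ ↔
      z = ![-(a : ℤ), 0] ∧ q = Sum.inr () := by
  simp [ssVASS2, Fin.ext_iff, fun i : Fin n => i.isLt.ne']

lemma notMem_ssVASS2_Δ_inr : (Sum.inr (), z, q) ∉ (ssVASS2 n as a).Δ := by
  simp [ssVASS2]

lemma one_one_le_iff {u : Fin 2 → ℕ} : ![1, 1] ≤ u ↔ 0 < u 0 ∧ 0 < u 1 := by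
  simp [Pi.le_def, Fin.forall_fin_two, Nat.one_le_iff_ne_zero, Nat.pos_iff_ne_zero]

/-- `as` is 0-indexed: the state `Sum.inl ⟨k + 1, _⟩` is `q_{k+1}`, from which the remaining
choices concern `as k, …, as (n - 1)`, i.e. the paper's `a_{k+1}, …, a_n`. -/
lemma monusCover_ssVASS2_iff {k : ℕ} (hk : k ≤ n) (v : Fin 2 → ℕ) :
    MonusCover (ssVASS2 n as a) (Sum.inl ⟨k + 1, by omega⟩) v (Sum.inr ()) ![1, 1] ↔
      ∃ x : Fin n → ℕ, (∀ i, x i ≤ 1) ∧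
        a + 1 ≤ v 0 + tailSum as x k ∧ tailSum as x k < v 1 := by
  induction hk using Nat.decreasingInduction generalizing v with
  | self =>
    rw [monusCover_iff_of_ne Sum.inl_ne_inr]
    simp only [mem_ssVASS2_Δ_last, and_assoc, exists_and_left, exists_eq_left,
      monusCover_self_iff_of_forall_notMem (fun _ _ => notMem_ssVASS2_Δ_inr),
      tailSum_of_le _ le_rfl, one_one_le_iff, exists_and_right,
      show ∃ x : Fin n → ℕ, ∀ i, x i ≤ 1 from ⟨0, fun _ => zero_le_one⟩, true_and]
    simp [mstep]
  | of_succ k hk ih =>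
    rw [monusCover_iff_of_ne Sum.inl_ne_inr]
    simp only [mem_ssVASS2_Δ_succ ⟨k, hk⟩, or_and_right, exists_or, and_assoc, exists_and_left,
      exists_eq_left, ih]
    refine Iff.trans ?_
      (exists_tailSum_iff ⟨k, hk⟩ (P := fun S => a + 1 ≤ v 0 + S ∧ S < v 1)).symm
    simp only [and_or_left, exists_or]
    -- truncation of the second coordinate is harmless: `S < v 1 ∸ a_k ↔ a_k + S < v 1`
    refine or_congr (exists_congr fun x => and_congr_right' ?_)
      (exists_congr fun x => and_congr_right' ?_) <;>
    · simp only [mstep, Matrix.cons_val_zero, Matrix.cons_val_one, Matrix.cons_val_fin_one]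
      omega

end SubsetSumVASS

/-- In the 2-VASS above, `t(1,1)` is coverable from `s(0,0)` under
monus semantics iff there is `(x_1,…,x_n) ∈ {0,1}^n` with `x_1a_1 + ⋯ + x_na_n = a`. -/
theorem stmt16 (n : ℕ) (as : Fin n → ℕ) (a : ℕ) :
    MonusCover (ssVASS2 n as a) (Sum.inl ⟨0, by omega⟩) ![0, 0] (Sum.inr ()) ![1, 1] ↔
    ∃ x : Fin n → ℕ, (∀ i, x i ≤ 1) ∧ ∑ i, x i * as i = a := by
  rw [monusCover_iff_of_ne Sum.inl_ne_inr]
  simp only [mem_ssVASS2_Δ_zero, and_assoc, exists_and_left, exists_eq_left]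
  rw [monusCover_ssVASS2_iff (Nat.zero_le n)]
  refine exists_congr fun x => and_congr_right' ?_
  simp only [mstep, Matrix.cons_val_zero, Matrix.cons_val_one, Matrix.cons_val_fin_one,
    tailSum_zero]
  omega
end
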